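/- arXiv:1804.06543 — 4 statements merged into one kernel-verified Lean document; each statement's English description precedes it below -/
import Mathlib

section
/- Fix an integer N ≥ 1, reals S̄ > 0, E_S ∈ ℝ, θ_i > 0 and γ_i > 0 for i = 1,…,N. The feasible set of problem P2.a, namely {(d, E) ∈ ℝᴺ × ℝᴺ : for all i, d_i ≥ θ_i, E_i ≥ 0, d_i·log₂(1 + γ_i E_i / d_i) ≥ S̄, and Σᵢ E_i ≤ E_S}, is a convex subset of ℝᴺ × ℝᴺ. (Lemma 1 of the paper: problem P2 is a convex optimization problem.) -/
/-!
The throughput constraint `S̄ ≤ d log₂ (1 + γ E / d)` says that the perspective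
`(d, E) ↦ d f (E / d)` of the concave function `f t = log₂ (1 + γ t)` is at least `S̄`.
Perspectives of concave functions are jointly concave, so each throughput constraint cuts out
a convex superlevel set; all other constraints are half-spaces.
-/

open Real Set

section Perspective

variable {𝕜 E : Type*} [Field 𝕜] [LinearOrder 𝕜] [IsStrictOrderedRing 𝕜]
  [AddCommGroup E] [Module 𝕜 E] {s : Set E} {f : E → 𝕜}

theorem ConcaveOn.perspective_combination (hf : ConcaveOn 𝕜 s f) {t₁ t₂ a b : 𝕜} {x₁ x₂ : E}
    (ht₁ : 0 < t₁) (ht₂ : 0 < t₂) (hx₁ : t₁⁻¹ • x₁ ∈ s) (hx₂ : t₂⁻¹ • x₂ ∈ s)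
    (ha : 0 ≤ a) (hb : 0 ≤ b) (hab : a + b = 1) :
    (a * t₁ + b * t₂)⁻¹ • (a • x₁ + b • x₂) ∈ s ∧
      a * (t₁ * f (t₁⁻¹ • x₁)) + b * (t₂ * f (t₂⁻¹ • x₂)) ≤
        (a * t₁ + b * t₂) * f ((a * t₁ + b * t₂)⁻¹ • (a • x₁ + b • x₂)) := by
  set t := a * t₁ + b * t₂
  have ht : 0 < t := convex_Ioi (0 : 𝕜) ht₁ ht₂ ha hb hab
  -- The point `(a • x₁ + b • x₂) / t` is the combination of `x₁ / t₁` and `x₂ / t₂`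
  -- with weights `a t₁ / t` and `b t₂ / t`.
  have hw : a * t₁ / t + b * t₂ / t = 1 := by rw [← add_div, div_self ht.ne']
  have hcomb : (a * t₁ / t) • (t₁⁻¹ • x₁) + (b * t₂ / t) • (t₂⁻¹ • x₂) =
      t⁻¹ • (a • x₁ + b • x₂) := by
    rw [smul_smul, smul_smul, smul_add, smul_smul, smul_smul]
    congr 2 <;> field_simp
  have hmem := hf.1 hx₁ hx₂ (by positivity) (by positivity) hw
  have hle := hf.2 hx₁ hx₂ (by positivity) (by positivity) hw
  rw [hcomb] at hmem hle
  refine ⟨hmem, ?_⟩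
  calc a * (t₁ * f (t₁⁻¹ • x₁)) + b * (t₂ * f (t₂⁻¹ • x₂))
      = t * ((a * t₁ / t) • f (t₁⁻¹ • x₁) + (b * t₂ / t) • f (t₂⁻¹ • x₂)) := by
        simp only [smul_eq_mul]; field_simp
    _ ≤ t * f (t⁻¹ • (a • x₁ + b • x₂)) := by gcongr

theorem ConcaveOn.perspective (hf : ConcaveOn 𝕜 s f) :
    ConcaveOn 𝕜 {p : 𝕜 × E | 0 < p.1 ∧ p.1⁻¹ • p.2 ∈ s} fun p => p.1 * f (p.1⁻¹ • p.2) := by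
  refine ⟨?_, ?_⟩ <;> rintro ⟨t₁, x₁⟩ ⟨ht₁, hx₁⟩ ⟨t₂, x₂⟩ ⟨ht₂, hx₂⟩ a b ha hb hab <;>
    simp only [mem_ofPred_eq, Prod.mk_add_mk, Prod.smul_mk, smul_eq_mul]
  · exact ⟨convex_Ioi (0 : 𝕜) ht₁ ht₂ ha hb hab,
      (hf.perspective_combination ht₁ ht₂ hx₁ hx₂ ha hb hab).1⟩
  · exact (hf.perspective_combination ht₁ ht₂ hx₁ hx₂ ha hb hab).2

end Perspective

theorem concaveOn_logb_one_add_mul {b γ : ℝ} (hb : 1 ≤ b) (hγ : 0 ≤ γ) :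
    ConcaveOn ℝ (Ici 0) fun t => logb b (1 + γ * t) := by
  refine ⟨convex_Ici 0, fun x hx y hy a c ha hc hac => ?_⟩
  have hx' : 0 < 1 + γ * x := add_pos_of_pos_of_nonneg one_pos (mul_nonneg hγ hx)
  have hy' : 0 < 1 + γ * y := add_pos_of_pos_of_nonneg one_pos (mul_nonneg hγ hy)
  have hlog := strictConcaveOn_log_Ioi.concaveOn.2 hx' hy' ha hc hac
  have hcomb : a • (1 + γ * x) + c • (1 + γ * y) = 1 + γ * (a • x + c • y) := by
    simp only [smul_eq_mul]; linear_combination hac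
  rw [hcomb] at hlog
  simp only [logb, smul_eq_mul, ← add_div, ← mul_div_assoc]
  exact div_le_div_of_nonneg_right hlog (log_nonneg hb)

theorem convex_throughput_region {θ γ Sb : ℝ} (hθ : 0 < θ) (hγ : 0 ≤ γ) :
    Convex ℝ {q : ℝ × ℝ | θ ≤ q.1 ∧ 0 ≤ q.2 ∧ Sb ≤ q.1 * logb 2 (1 + γ * q.2 / q.1)} := by
  have hsuper := ((concaveOn_logb_one_add_mul one_le_two hγ).perspective).convex_ge Sb
  have hservice : Convex ℝ (Prod.fst ⁻¹' Ici θ : Set (ℝ × ℝ)) :=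
    (convex_Ici θ).linear_preimage (LinearMap.fst ℝ ℝ ℝ)
  convert hservice.inter hsuper using 1
  ext ⟨d, e⟩
  simp only [mem_ofPred_eq, mem_inter_iff, mem_preimage, mem_Ici, smul_eq_mul, inv_mul_eq_div,
    mul_div_assoc]
  constructor
  · rintro ⟨hd, he, hS⟩
    exact ⟨hd, ⟨⟨hθ.trans_le hd, div_nonneg he (hθ.trans_le hd).le⟩, hS⟩⟩
  · rintro ⟨hd, ⟨⟨hd₀, he⟩, hS⟩⟩
    exact ⟨hd, by simpa using (le_div_iff₀ hd₀).1 he, hS⟩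

theorem feasible_set_P2a_convex_general (N : ℕ) (Sb E_S : ℝ)
    (θ γ : Fin N → ℝ) (hθ : ∀ i, 0 < θ i) (hγ : ∀ i, 0 < γ i) :
    Convex ℝ {p : (Fin N → ℝ) × (Fin N → ℝ) |
      (∀ i, θ i ≤ p.1 i ∧ 0 ≤ p.2 i ∧
        Sb ≤ p.1 i * Real.logb 2 (1 + γ i * p.2 i / p.1 i)) ∧
      ∑ i, p.2 i ≤ E_S} := by
  have hlinks : Convex ℝ (⋂ i, (LinearMap.proj i).prodMap (LinearMap.proj i) ⁻¹'
      {q : ℝ × ℝ | θ i ≤ q.1 ∧ 0 ≤ q.2 ∧ Sb ≤ q.1 * logb 2 (1 + γ i * q.2 / q.1)}) :=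
    convex_iInter fun i =>
      (convex_throughput_region (hθ i) (hγ i).le).linear_preimage _
  have hbudget : Convex ℝ {p : (Fin N → ℝ) × (Fin N → ℝ) | ∑ i, p.2 i ≤ E_S} :=
    convex_halfSpace_le
      ⟨fun p q => Finset.sum_add_distrib, fun c p => by simp [Finset.mul_sum]⟩ E_S
  convert hlinks.inter hbudget using 1
  ext p
  simp

/-- Lemma 1: the feasible set of problem P2.a is a convex subset of `ℝᴺ × ℝᴺ`. -/
theorem feasible_set_P2a_convex (N : ℕ) (hN : 1 ≤ N) (Sb E_S : ℝ) (hS : 0 < Sb)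
    (θ γ : Fin N → ℝ) (hθ : ∀ i, 0 < θ i) (hγ : ∀ i, 0 < γ i) :
    Convex ℝ {p : (Fin N → ℝ) × (Fin N → ℝ) |
      (∀ i, θ i ≤ p.1 i ∧ 0 ≤ p.2 i ∧
        Sb ≤ p.1 i * Real.logb 2 (1 + γ i * p.2 i / p.1 i)) ∧
      ∑ i, p.2 i ≤ E_S} :=
  feasible_set_P2a_convex_general N Sb E_S θ γ hθ hγ
end

section
/- For every S̄ > 0, the minimum-energy function d ↦ d·(2^{S̄/d} − 1) is strictly decreasing on (0, ∞). That is, allocating a longer service time strictly reduces the energy required to deliver a packet of normalized size S̄. -/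
/-!
Writing `x = S / d`, the energy is `d * (b ^ (S / d) - 1) = S * (b ^ x - 1) / x`, i.e. `S` times
the slope of the secant of the strictly convex function `x ↦ b ^ x` between `0` and `x`. That slope
strictly increases with `x`, and `x` strictly decreases with `d`.
-/

open Real Set

theorem strictConvexOn_rpow_left {b : ℝ} (hb₀ : 0 < b) (hb₁ : b ≠ 1) :
    StrictConvexOn ℝ univ (fun x : ℝ => b ^ x) := by
  refine ⟨convex_univ, fun x _ y _ hxy s t hs ht hst => ?_⟩
  have hlog : log b ≠ 0 := log_ne_zero_of_pos_of_ne_one hb₀ hb₁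
  have hne : log b * x ≠ log b * y := fun h => hxy (mul_left_cancel₀ hlog h)
  have hexp := strictConvexOn_exp.2 (mem_univ _) (mem_univ _) hne hs ht hst
  simp only [smul_eq_mul, rpow_def_of_pos hb₀] at hexp ⊢
  convert hexp using 2
  ring

theorem strictMonoOn_rpow_sub_one_div {b : ℝ} (hb₀ : 0 < b) (hb₁ : b ≠ 1) :
    StrictMonoOn (fun x : ℝ => (b ^ x - 1) / x) (Ioi 0) := by
  intro x hx y hy hxy
  simpa using (strictConvexOn_rpow_left hb₀ hb₁).secant_strict_mono (a := 0)
    (mem_univ _) (mem_univ _) (mem_univ _) (ne_of_gt hx) (ne_of_gt hy) hxy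

theorem strictAntiOn_mul_rpow_div_sub_one {b S : ℝ} (hb₀ : 0 < b) (hb₁ : b ≠ 1) (hS : 0 < S) :
    StrictAntiOn (fun d : ℝ => d * (b ^ (S / d) - 1)) (Ioi 0) := by
  have hsecant : ∀ d > 0, d * (b ^ (S / d) - 1) = S * ((b ^ (S / d) - 1) / (S / d)) := by
    intro d hd
    field_simp
  intro d₁ hd₁ d₂ hd₂ hd
  dsimp only
  rw [hsecant d₁ hd₁, hsecant d₂ hd₂]
  refine mul_lt_mul_of_pos_left (strictMonoOn_rpow_sub_one_div hb₀ hb₁ ?_ ?_ ?_) hS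
  · exact div_pos hS hd₂
  · exact div_pos hS hd₁
  · exact div_lt_div_of_pos_left hS hd₁ hd

/-- For every `S̄ > 0`, the minimum-energy function `d ↦ d·(2^{S̄/d} − 1)` is
strictly decreasing on `(0, ∞)`. -/
theorem min_energy_strictAntiOn (Sb : ℝ) (hS : 0 < Sb) :
    StrictAntiOn (fun d : ℝ => d * ((2 : ℝ) ^ (Sb / d) - 1)) (Set.Ioi 0) :=
  strictAntiOn_mul_rpow_div_sub_one two_pos (by norm_num) hS
end

section
/- (Per-coordinate core of Lemma 3.) Fix reals c > 0, λ > 0, γ > 0, S̄ > 0 and θ > 0, and let x* > 0 be the unique solution of 2^{x}·(ln(2)·x − 1) + 1 = cγ/λ. Then the function h(d) = c·d + (λ/γ)·d·(2^{S̄/d} − 1) attains its minimum over [θ, ∞) at d* = max{θ, S̄/x*}; that is, h(d) ≥ h(d*) for all d ≥ θ. -/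
open Real Set

/-!
Writing `k = λ/γ`, the derivative of `h` at `d > 0` is `c - k·g(S̄/d)` with
`g(u) = 2^u (ln 2 · u - 1) + 1` (`energySlope`), and `g'(u) = (ln 2)² u 2^u ≥ 0` for `u ≥ 0`.
Since `c = k·g(x*)`, `h` is nonincreasing on `(0, S̄/x*]` and nondecreasing on `[S̄/x*, ∞)`,
so its minimum over `[θ, ∞)` is at `max θ (S̄/x*)`.
-/

noncomputable def energySlope (u : ℝ) : ℝ := 2 ^ u * (log 2 * u - 1) + 1

theorem hasDerivAt_energySlope (u : ℝ) :
    HasDerivAt energySlope (log 2 ^ 2 * u * 2 ^ u) u := by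
  have hpow := (hasStrictDerivAt_const_rpow (by norm_num : (0 : ℝ) < 2) u).hasDerivAt
  have hlin := ((hasDerivAt_id u).const_mul (log 2)).sub_const 1
  refine ((hpow.mul hlin).add_const 1).congr_deriv ?_
  simp only [id_eq]
  ring

theorem monotoneOn_energySlope : MonotoneOn energySlope (Ici 0) := by
  refine monotoneOn_of_hasDerivWithinAt_nonneg (convex_Ici 0)
    (fun u _ ↦ (hasDerivAt_energySlope u).continuousAt.continuousWithinAt)
    (fun u _ ↦ (hasDerivAt_energySlope u).hasDerivWithinAt) fun u hu ↦ ?_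
  rw [interior_Ici] at hu
  exact mul_nonneg (mul_nonneg (sq_nonneg _) hu.le) (rpow_nonneg zero_le_two u)

theorem hasDerivAt_mul_two_rpow_div_sub_one (S : ℝ) {d : ℝ} (hd : 0 < d) :
    HasDerivAt (fun d : ℝ ↦ d * (2 ^ (S / d) - 1)) (-energySlope (S / d)) d := by
  have hquot : HasDerivAt (fun d : ℝ ↦ S / d) (-(S / d) / d) d := by
    refine ((hasDerivAt_inv hd.ne').const_mul S).congr_deriv ?_
    field_simp
  have hpow :=
    (hasStrictDerivAt_const_rpow (by norm_num : (0 : ℝ) < 2) (S / d)).hasDerivAt.comp d hquot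
  refine ((hasDerivAt_id d).mul (hpow.sub_const 1)).congr_deriv ?_
  simp only [energySlope, id_eq, Function.comp_apply]
  field_simp
  ring

section Lagrangian

variable {c k S x : ℝ}

theorem hasDerivAt_lagrangian (hc : c = k * energySlope x) {d : ℝ} (hd : 0 < d) :
    HasDerivAt (fun d : ℝ ↦ c * d + k * (d * (2 ^ (S / d) - 1)))
      (k * (energySlope x - energySlope (S / d))) d := by
  refine (((hasDerivAt_id d).const_mul c).add
    ((hasDerivAt_mul_two_rpow_div_sub_one S hd).const_mul k)).congr_deriv ?_
  rw [hc]
  ring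

theorem monotoneOn_lagrangian (hc : c = k * energySlope x) (hk : 0 ≤ k) (hS : 0 < S)
    (hx : 0 < x) :
    MonotoneOn (fun d : ℝ ↦ c * d + k * (d * (2 ^ (S / d) - 1))) (Ici (S / x)) := by
  have hpos : ∀ d ∈ Ici (S / x), 0 < d := fun d hd ↦ (div_pos hS hx).trans_le hd
  refine monotoneOn_of_hasDerivWithinAt_nonneg (convex_Ici _)
    (fun d hd ↦ (hasDerivAt_lagrangian hc (hpos d hd)).continuousAt.continuousWithinAt)
    (fun d hd ↦ (hasDerivAt_lagrangian hc (hpos d (interior_subset hd))).hasDerivWithinAt)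
    fun d hd ↦ ?_
  rw [interior_Ici] at hd
  have hd0 : 0 < d := (div_pos hS hx).trans hd
  have hle : S / d ≤ x := (div_le_iff₀ hd0).2 (by have := (div_lt_iff₀ hx).1 hd; linarith)
  exact mul_nonneg hk (sub_nonneg.2 (monotoneOn_energySlope (div_pos hS hd0).le hx.le hle))

theorem antitoneOn_lagrangian (hc : c = k * energySlope x) (hk : 0 ≤ k) (hx : 0 < x) :
    AntitoneOn (fun d : ℝ ↦ c * d + k * (d * (2 ^ (S / d) - 1))) (Ioc 0 (S / x)) := by
  refine antitoneOn_of_hasDerivWithinAt_nonpos (convex_Ioc _ _)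
    (fun d hd ↦ (hasDerivAt_lagrangian hc hd.1).continuousAt.continuousWithinAt)
    (fun d hd ↦ (hasDerivAt_lagrangian hc (interior_subset hd).1).hasDerivWithinAt)
    fun d hd ↦ ?_
  rw [interior_Ioc] at hd
  have hle : x ≤ S / d := (le_div_iff₀ hd.1).2 (by have := (lt_div_iff₀ hx).1 hd.2; linarith)
  exact mul_nonpos_of_nonneg_of_nonpos hk
    (sub_nonpos.2 (monotoneOn_energySlope hx.le (hx.le.trans hle) hle))

end Lagrangian

theorem le_of_antitoneOn_Icc_of_monotoneOn_Ici {f : ℝ → ℝ} {θ m d : ℝ}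
    (hanti : AntitoneOn f (Icc θ m)) (hmono : MonotoneOn f (Ici m)) (hd : θ ≤ d) :
    f (max θ m) ≤ f d := by
  rcases le_total θ m with hθm | hmθ
  · rw [max_eq_right hθm]
    rcases le_total d m with hdm | hmd
    · exact hanti ⟨hd, hdm⟩ ⟨hθm, le_rfl⟩ hdm
    · exact hmono self_mem_Ici hmd hmd
  · rw [max_eq_left hmθ]
    exact hmono hmθ (hmθ.trans hd) hd

theorem lagrangian_coordinate_min_general (c lam γ Sb θ x : ℝ) (hlam : 0 < lam)
    (hγ : 0 < γ) (hS : 0 < Sb) (hθ : 0 < θ) (hx : 0 < x)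
    (hroot : (2 : ℝ) ^ x * (Real.log 2 * x - 1) + 1 = c * γ / lam) :
    ∀ d : ℝ, θ ≤ d →
      c * max θ (Sb / x) +
          (lam / γ) * (max θ (Sb / x) * ((2 : ℝ) ^ (Sb / max θ (Sb / x)) - 1)) ≤
        c * d + (lam / γ) * (d * ((2 : ℝ) ^ (Sb / d) - 1)) := by
  intro d hd
  have hc_eq : c = lam / γ * energySlope x := by
    rw [energySlope, hroot]
    field_simp
  have hk : 0 ≤ lam / γ := (div_pos hlam hγ).le
  exact le_of_antitoneOn_Icc_of_monotoneOn_Ici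
    ((antitoneOn_lagrangian hc_eq hk hx).mono fun t ht ↦ ⟨hθ.trans_le ht.1, ht.2⟩)
    (monotoneOn_lagrangian hc_eq hk hS hx) hd

/-- Per-coordinate core of Lemma 3: for `c, λ, γ, S̄, θ > 0` and `x* > 0` the unique
root of `2^x·(ln(2)·x − 1) + 1 = cγ/λ`, the function
`h(d) = c·d + (λ/γ)·d·(2^{S̄/d} − 1)` attains its minimum over `[θ, ∞)` at
`d* = max{θ, S̄/x*}`. -/
theorem lagrangian_coordinate_min (c lam γ Sb θ x : ℝ) (hc : 0 < c) (hlam : 0 < lam)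
    (hγ : 0 < γ) (hS : 0 < Sb) (hθ : 0 < θ) (hx : 0 < x)
    (hroot : (2 : ℝ) ^ x * (Real.log 2 * x - 1) + 1 = c * γ / lam) :
    ∀ d : ℝ, θ ≤ d →
      c * max θ (Sb / x) +
          (lam / γ) * (max θ (Sb / x) * ((2 : ℝ) ^ (Sb / max θ (Sb / x)) - 1)) ≤
        c * d + (lam / γ) * (d * ((2 : ℝ) ^ (Sb / d) - 1)) :=
  lagrangian_coordinate_min_general c lam γ Sb θ x hlam hγ hS hθ hx hroot
end

section
/- (First-order global lower bound used in problem P3.) For all reals a > 0, b > 0 and all u, u₀ ≥ 0: log₂(1 + a/(b + u)) ≥ log₂(1 + a/(b + u₀)) − [a·log₂(e) / ((b + u₀)·(a + b + u₀))]·(u − u₀). Equivalently, with a = νE/(Γσ²·d) (up to scaling by d), b = h², u = ‖q − L‖², u₀ = ‖qⁿ − L‖², the throughput satisfies R(q) ≥ R^{lb}(q) := C₁ⁿ − C₂ⁿ·(‖q − L‖² − ‖qⁿ − L‖²), where C₃ⁿ = h² + ‖qⁿ − L‖², C₁ⁿ = d·log₂(1 + νE/(Γσ²·C₃ⁿ·d)),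 and C₂ⁿ = ν·log₂(e)·d·E / (C₃ⁿ·(Γσ²·C₃ⁿ·d + νE)). -/
/-!
`x ↦ log (1 + a / x)` is convex on `(0, ∞)`, so it lies above its tangent at `x₀`; concretely,
`log y ≤ y - 1` at `y = (1 + a / x₀) / (1 + a / x)` gives the tangent bound with slack
`a (x - x₀)² / (x₀ (a + x₀) (a + x))`. The throughput bound is the case `a = νE / (Γσ²d)`,
`x = h² + ‖q - L‖²`, scaled by `d`.
-/

open Real

theorem log_one_add_div_tangent_le {a x x₀ : ℝ} (ha : 0 ≤ a) (hx : 0 < x) (hx₀ : 0 < x₀) :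
    log (1 + a / x₀) - a / (x₀ * (a + x₀)) * (x - x₀) ≤ log (1 + a / x) := by
  have hp : 0 < 1 + a / x := by positivity
  have hp₀ : 0 < 1 + a / x₀ := by positivity
  have ratio_sub_one : (1 + a / x₀) / (1 + a / x) - 1 ≤ a / (x₀ * (a + x₀)) * (x - x₀) := by
    have slack : a / (x₀ * (a + x₀)) * (x - x₀) - ((1 + a / x₀) / (1 + a / x) - 1) =
        a * (x - x₀) ^ 2 / (x₀ * (a + x₀) * (a + x)) := by
      field_simp
      ring
    have slack_nonneg : 0 ≤ a * (x - x₀) ^ 2 / (x₀ * (a + x₀) * (a + x)) := by positivity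
    linarith
  have log_ratio_le := log_le_sub_one_of_pos (div_pos hp₀ hp)
  rw [log_div hp₀.ne' hp.ne'] at log_ratio_le
  linarith

theorem logb_one_add_div_tangent_le {B a x x₀ : ℝ} (hB : 1 < B) (ha : 0 ≤ a) (hx : 0 < x)
    (hx₀ : 0 < x₀) :
    logb B (1 + a / x₀) - a * logb B (exp 1) / (x₀ * (a + x₀)) * (x - x₀) ≤
      logb B (1 + a / x) :=
  calc logb B (1 + a / x₀) - a * logb B (exp 1) / (x₀ * (a + x₀)) * (x - x₀)
      = (log (1 + a / x₀) - a / (x₀ * (a + x₀)) * (x - x₀)) / log B := by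
        simp only [logb, log_exp]
        ring
    _ ≤ log (1 + a / x) / log B :=
        div_le_div_of_nonneg_right (log_one_add_div_tangent_le ha hx hx₀) (log_pos hB).le

/-- First-order global lower bound used in problem P3: for `a, b > 0` and
`u, u₀ ≥ 0`, `log₂(1 + a/(b + u)) ≥ log₂(1 + a/(b + u₀)) −
[a·log₂(e)/((b + u₀)(a + b + u₀))]·(u − u₀)`; equivalently, the throughput
`R(q)` is globally lower bounded by its first-order Taylor expansion
`R^{lb}(q) = C₁ − C₂·(‖q − L‖² − ‖qⁿ − L‖²)` in the squared distance. -/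
theorem taylor_lower_bound_P3 (a b u u₀ : ℝ) (ha : 0 < a) (hb : 0 < b)
    (hu : 0 ≤ u) (hu₀ : 0 ≤ u₀) :
    (Real.logb 2 (1 + a / (b + u₀)) -
        a * Real.logb 2 (Real.exp 1) / ((b + u₀) * (a + b + u₀)) * (u - u₀) ≤
      Real.logb 2 (1 + a / (b + u))) ∧
    ∀ (ν Γ σ2 h d E : ℝ), 0 < ν → 0 < Γ → 0 < σ2 → 0 < h → 0 < d → 0 < E →
      ∀ (q qn L : EuclideanSpace ℝ (Fin 2)),
        d * Real.logb 2
            (1 + ν * E / (Γ * σ2 * ((h ^ 2 + ‖qn - L‖ ^ 2)) * d)) -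
          ν * Real.logb 2 (Real.exp 1) * d * E /
              ((h ^ 2 + ‖qn - L‖ ^ 2) *
                (Γ * σ2 * (h ^ 2 + ‖qn - L‖ ^ 2) * d + ν * E)) *
            (‖q - L‖ ^ 2 - ‖qn - L‖ ^ 2) ≤
        d * Real.logb 2 (1 + ν * E / (Γ * σ2 * (h ^ 2 + ‖q - L‖ ^ 2) * d)) := by
  refine ⟨?_, fun ν Γ σ2 h d E hν hΓ hσ2 hh hd hE q qn L => ?_⟩
  · have bound := logb_one_add_div_tangent_le (x := b + u) (x₀ := b + u₀) one_lt_two ha.le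
      (by positivity) (by positivity)
    simpa only [add_assoc, add_sub_add_left_eq_sub] using bound
  · set x := h ^ 2 + ‖q - L‖ ^ 2
    set x₀ := h ^ 2 + ‖qn - L‖ ^ 2
    set snr := ν * E / (Γ * σ2 * d)
    have hx : 0 < x := by positivity
    have hx₀ : 0 < x₀ := by positivity
    have snr_div (y : ℝ) : ν * E / (Γ * σ2 * y * d) = snr / y := by
      simp only [snr]
      ring
    have slope : ν * Real.logb 2 (Real.exp 1) * d * E / (x₀ * (Γ * σ2 * x₀ * d + ν * E)) =
        d * (snr * Real.logb 2 (Real.exp 1) / (x₀ * (snr + x₀))) := by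
      simp only [snr]
      field_simp
      ring
    have bound := logb_one_add_div_tangent_le one_lt_two (by positivity : 0 ≤ snr) hx hx₀
    have hsub : ‖q - L‖ ^ 2 - ‖qn - L‖ ^ 2 = x - x₀ := by ring
    rw [snr_div, snr_div, slope, hsub, mul_assoc, ← mul_sub]
    exact mul_le_mul_of_nonneg_left bound hd.le
end
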